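/- arXiv:1311.0194 — 2 statements merged into one kernel-verified Lean document; each statement's English description precedes it below -/
import Mathlib

section
/- Let N ∈ ℕ and h ∈ L^∞(Σ_N) be given with ‖h‖_{L^∞} < 1. Then there is a martingale f = (f_n) adapted to the filtration (Σ_n) with the following properties: (a) f_N = h; (b) sup_n ‖f_n‖_{L^∞} ≤ 1; (c) the set {x ∈ K : lim_{n→∞} f_n(x) = 1} is dense in K; (d) the set {x ∈ K : lim_{n→∞} f_n(x) = −1} is dense in K. -/
open MeasureTheory Filter Set
open scoped ENNReal Topology

noncomputable section

namespace MartingalePaper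

variable {Ω : Type}

/-- The discrete topology on `Set Ω`; each finite partition `D n` thus carries the
discrete topology, and `ℕ → Set Ω` the product topology. -/
instance : TopologicalSpace (Set Ω) := ⊥

/-- `(D n)` is a sequence of finite measurable partitions of `Ω`, each refined by the next. -/
def IsPartitionSeq [MeasurableSpace Ω] (D : ℕ → Finset (Set Ω)) : Prop :=
  (∀ n, ∀ A ∈ D n, MeasurableSet A) ∧
  (∀ n, ∀ A ∈ D n, A.Nonempty) ∧
  (∀ n, (D n : Set (Set Ω)).PairwiseDisjoint id) ∧
  (∀ n, ⋃ A ∈ D n, A = (Set.univ : Set Ω)) ∧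
  (∀ n, ∀ A ∈ D (n + 1), ∃ B ∈ D n, A ⊆ B)

/-- Standing Assumptions (A). -/
def AssumptionA [MeasurableSpace Ω] (P : Measure Ω) (D : ℕ → Finset (Set Ω)) : Prop :=
  (∀ n, ∀ A ∈ D n, 0 < P A) ∧ (∀ n, ∀ A ∈ D n, ∃ m, n < m ∧ A ∉ D m)

/-- The compact metrizable space `K` associated to the filtration: decreasing chains of atoms. -/
abbrev Kt (D : ℕ → Finset (Set Ω)) : Type _ :=
  {x : ℕ → Set Ω // (∀ n, x n ∈ D n) ∧ ∀ n m : ℕ, n ≤ m → x m ⊆ x n}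

/-- The function on `Ω` determined by the values `f n A` on the atoms `A ∈ D n`. -/
def mval (D : ℕ → Finset (Set Ω)) (f : ℕ → Set Ω → ℝ) (n : ℕ) (w : Ω) : ℝ :=
  ∑ A ∈ D n, A.indicator (fun _ => f n A) w

/-- A martingale adapted to the filtration `(σ(D n))`, in its canonical representation by
the (a.e. constant) values on the atoms:  `f n A` is the value of the `n`-th function on
the atom `A ∈ D n`. -/
def IsMart [MeasurableSpace Ω] (P : Measure Ω) (D : ℕ → Finset (Set Ω))
    (f : ℕ → Set Ω → ℝ) : Prop :=
  (∀ n, ∀ A : Set Ω, A ∉ D n → f n A = 0) ∧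
  ∀ n m : ℕ, n ≤ m → ∀ A ∈ D n,
    ∫ w in A, mval D f n w ∂P = ∫ w in A, mval D f m w ∂P

/-- `‖f_n‖_{L^p}`. -/
def lpNorm [MeasurableSpace Ω] (P : Measure Ω) (D : ℕ → Finset (Set Ω)) (p : ℝ≥0∞)
    (f : ℕ → Set Ω → ℝ) (n : ℕ) : ℝ≥0∞ :=
  eLpNorm (mval D f n) p P

/-- `‖f‖_p = sup_n ‖f_n‖_{L^p}`. -/
def martNorm [MeasurableSpace Ω] (P : Measure Ω) (D : ℕ → Finset (Set Ω)) (p : ℝ≥0∞)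
    (f : ℕ → Set Ω → ℝ) : ℝ≥0∞ :=
  ⨆ n, lpNorm P D p f n

/-- `M_p`, the space of `L^p`-bounded martingales adapted to the filtration. -/
def Mart [MeasurableSpace Ω] (P : Measure Ω) (D : ℕ → Finset (Set Ω)) (p : ℝ≥0∞) : Type _ :=
  {f : ℕ → Set Ω → ℝ // IsMart P D f ∧ martNorm P D p f ≠ ∞}

/-- The norm topology on `M_p`: the topology generated by the balls of the norm `‖·‖_p`
(which is exactly the topology of this metric). -/
instance [MeasurableSpace Ω] (P : Measure Ω) (D : ℕ → Finset (Set Ω)) (p : ℝ≥0∞) :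
    TopologicalSpace (Mart P D p) :=
  TopologicalSpace.generateFrom
    {s | ∃ (f : Mart P D p) (ε : ℝ≥0∞), 0 < ε ∧
      s = {g : Mart P D p | martNorm P D p (fun k A => g.1 k A - f.1 k A) < ε}}

/-- `limsup f_n(x) = +∞` and `liminf f_n(x) = -∞`. -/
def DivergesAt (D : ℕ → Finset (Set Ω)) (f : ℕ → Set Ω → ℝ) (x : Kt D) : Prop :=
  Filter.limsup (fun n => ((f n (x.1 n) : ℝ) : EReal)) Filter.atTop = ⊤ ∧
  Filter.liminf (fun n => ((f n (x.1 n) : ℝ) : EReal)) Filter.atTop = ⊥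


/-!
Below level `N` the martingale is the conditional expectation of `h`. From level `N` on, every
atom carries a value `v ∈ (-1, 1)` and a phase `±1`. When an atom splits, one child of at most
half its mass moves by `(1 - v²)/2` in the direction of the phase, the other children move the
opposite way by at most as much (this is where the half-mass choice enters), so the mean is kept
and all values stay in `(-1, 1)`; then the phase flips.

To reach `σ = ±1` from a given atom, follow the small child whenever the phase is `σ` and another
child otherwise. Along such a path `σ f_n` never decreases, and at each split of phase `σ` the
distance `1 - σ f_n` is replaced by `(1 - σ f_n)² / 2`. Every point of `K` passes infinitely many
splits, and the phase alternates at them, so `f_n → σ` along the path; since the path may start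
in any cylinder of `K`, these limit points are dense.
-/

open scoped Classical in
def atomsBelow (D : ℕ → Finset (Set Ω)) (m : ℕ) (A : Set Ω) : Finset (Set Ω) :=
  (D m).filter (· ⊆ A)

lemma mem_atomsBelow {D : ℕ → Finset (Set Ω)} {m : ℕ} {A B : Set Ω} :
    B ∈ atomsBelow D m A ↔ B ∈ D m ∧ B ⊆ A := by
  simp [atomsBelow]

namespace IsPartitionSeq

variable [MeasurableSpace Ω] {D : ℕ → Finset (Set Ω)} (hpart : IsPartitionSeq D)
include hpart

lemma eq_of_subset {n : ℕ} {A A' B : Set Ω} (hA : A ∈ D n) (hA' : A' ∈ D n)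
    (hB : B.Nonempty) (hBA : B ⊆ A) (hBA' : B ⊆ A') : A = A' := by
  by_contra hne
  obtain ⟨w, hw⟩ := hB
  exact Set.disjoint_left.1 (hpart.2.2.1 n hA hA' hne) (hBA hw) (hBA' hw)

lemma exists_mem (n : ℕ) (w : Ω) : ∃ A ∈ D n, w ∈ A := by
  have hw : w ∈ ⋃ A ∈ D n, A := (hpart.2.2.2.1 n).symm ▸ Set.mem_univ w
  simpa using hw

lemma exists_superset {n m : ℕ} (hnm : n ≤ m) {B : Set Ω} (hB : B ∈ D m) :
    ∃ A ∈ D n, B ⊆ A := by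
  induction m, hnm using Nat.le_induction generalizing B with
  | base => exact ⟨B, hB, subset_rfl⟩
  | succ m _ ih =>
    obtain ⟨C, hC, hBC⟩ := hpart.2.2.2.2 m B hB
    obtain ⟨A, hA, hCA⟩ := ih hC
    exact ⟨A, hA, hBC.trans hCA⟩

lemma biUnion_atomsBelow {n m : ℕ} (hnm : n ≤ m) {A : Set Ω} (hA : A ∈ D n) :
    ⋃ B ∈ atomsBelow D m A, B = A := by
  refine Set.Subset.antisymm (Set.iUnion₂_subset fun B hB => (mem_atomsBelow.1 hB).2)
    fun w hw => ?_
  obtain ⟨B, hB, hwB⟩ := hpart.exists_mem m w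
  obtain ⟨A', hA', hBA'⟩ := hpart.exists_superset hnm hB
  have hAA' : A = A' := hpart.eq_of_subset hA hA' (Set.singleton_nonempty w)
    (Set.singleton_subset_iff.2 hw) (Set.singleton_subset_iff.2 (hBA' hwB))
  exact Set.mem_biUnion (mem_atomsBelow.2 ⟨hB, hAA' ▸ hBA'⟩) hwB

lemma atomsBelow_self {n : ℕ} {A : Set Ω} (hA : A ∈ D n) : atomsBelow D n A = {A} := by
  ext B
  rw [mem_atomsBelow, Finset.mem_singleton]
  exact ⟨fun ⟨hB, hBA⟩ => hpart.eq_of_subset hB hA (hpart.2.1 n B hB) subset_rfl hBA,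
    by rintro rfl; exact ⟨hA, subset_rfl⟩⟩

lemma pairwiseDisjoint_atomsBelow (m M : ℕ) :
    (D m : Set (Set Ω)).PairwiseDisjoint (atomsBelow D M) := by
  intro C hC C' hC' hne
  refine Finset.disjoint_left.2 fun B hB hB' => hne ?_
  rw [mem_atomsBelow] at hB hB'
  exact hpart.eq_of_subset hC hC' (hpart.2.1 M B hB.1) hB.2 hB'.2

lemma biUnion_atomsBelow_atomsBelow {n m M : ℕ} (hnm : n ≤ m) (hmM : m ≤ M) {A : Set Ω}
    (hA : A ∈ D n) : (atomsBelow D m A).biUnion (atomsBelow D M) = atomsBelow D M A := by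
  ext B
  simp only [Finset.mem_biUnion, mem_atomsBelow]
  constructor
  · rintro ⟨C, ⟨-, hCA⟩, hB, hBC⟩
    exact ⟨hB, hBC.trans hCA⟩
  · rintro ⟨hB, hBA⟩
    obtain ⟨C, hC, hBC⟩ := hpart.exists_superset hmM hB
    obtain ⟨A', hA', hCA'⟩ := hpart.exists_superset hnm hC
    have hAA' : A = A' := hpart.eq_of_subset hA hA' (hpart.2.1 M B hB) hBA (hBC.trans hCA')
    exact ⟨C, ⟨hC, hAA' ▸ hCA'⟩, hB, hBC⟩

lemma sum_atomsBelow_atomsBelow {n m M : ℕ} (hnm : n ≤ m) (hmM : m ≤ M) {A : Set Ω}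
    (hA : A ∈ D n) (F : Set Ω → ℝ) :
    ∑ C ∈ atomsBelow D m A, ∑ B ∈ atomsBelow D M C, F B = ∑ B ∈ atomsBelow D M A, F B := by
  rw [← hpart.biUnion_atomsBelow_atomsBelow hnm hmM hA, Finset.sum_biUnion
    ((hpart.pairwiseDisjoint_atomsBelow m M).subset fun B hB => (mem_atomsBelow.1 hB).1)]

lemma measureReal_eq_sum_atomsBelow (P : Measure Ω) [IsFiniteMeasure P] {n m : ℕ} (hnm : n ≤ m)
    {A : Set Ω} (hA : A ∈ D n) : P.real A = ∑ B ∈ atomsBelow D m A, P.real B := by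
  conv_lhs => rw [← hpart.biUnion_atomsBelow hnm hA]
  exact measureReal_biUnion_finset ((hpart.2.2.1 m).subset fun B hB => (mem_atomsBelow.1 hB).1)
    fun B hB => hpart.1 m B (mem_atomsBelow.1 hB).1

lemma nontrivial_atomsBelow {m : ℕ} {C : Set Ω} (hC : C ∈ D m) (hsplit : C ∉ D (m + 1)) :
    (atomsBelow D (m + 1) C).Nontrivial := by
  obtain ⟨w, hw⟩ := hpart.2.1 m C hC
  have hne : (atomsBelow D (m + 1) C).Nonempty := by
    rw [← hpart.biUnion_atomsBelow m.le_succ hC] at hw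
    obtain ⟨B, hB, -⟩ := Set.mem_iUnion₂.1 hw
    exact ⟨B, hB⟩
  obtain ⟨B, hB⟩ | hnt := hne.exists_eq_singleton_or_nontrivial
  · have hBC : B = C := by simpa [hB] using hpart.biUnion_atomsBelow m.le_succ hC
    exact absurd (hBC ▸ (mem_atomsBelow.1 (hB ▸ Finset.mem_singleton_self B)).1) hsplit
  · exact hnt

end IsPartitionSeq

namespace Kt

variable {D : ℕ → Finset (Set Ω)}

lemma eventually_forall_agree_mem {U : Set (Kt D)} (hU : IsOpen U) {x : Kt D} (hx : x ∈ U) :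
    ∀ᶠ n in atTop, ∀ y : Kt D, (∀ i ≤ n, y.1 i = x.1 i) → y ∈ U := by
  obtain ⟨V, hV, rfl⟩ := isOpen_induced_iff.1 hU
  obtain ⟨I, u, hu, hIV⟩ := isOpen_pi_iff.1 hV x.1 hx
  filter_upwards [eventually_ge_atTop (I.sup id)] with n hn y hy
  exact hIV fun i hi => (hy i ((Finset.le_sup (f := id) hi).trans hn)).symm ▸ (hu i hi).2

lemma dense_of_forall_eventually_agree {S : Set (Kt D)}
    (hS : ∀ x : Kt D, ∀ᶠ n in atTop, ∃ y ∈ S, ∀ i ≤ n, y.1 i = x.1 i) : Dense S := by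
  refine dense_iff_inter_open.2 fun U hU ⟨x, hx⟩ => ?_
  obtain ⟨n, hUn, y, hyS, hy⟩ := ((eventually_forall_agree_mem hU hx).and (hS x)).exists
  exact ⟨y, hUn y hy, hyS⟩

lemma exists_agree_of_forall_exists_succ (R : ℕ → Set Ω → Set Ω → Prop)
    (hR : ∀ n, ∀ C ∈ D n, ∃ B ∈ D (n + 1), B ⊆ C ∧ R n C B) (x : Kt D) (n₀ : ℕ) :
    ∃ y : Kt D, (∀ i ≤ n₀, y.1 i = x.1 i) ∧ ∀ n ≥ n₀, R n (y.1 n) (y.1 (n + 1)) := by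
  choose! g hgD hgC hgR using hR
  let y : ℕ → Set Ω := fun n => Nat.rec (x.1 0) (fun k C => if k < n₀ then x.1 (k + 1) else g k C) n
  have hy_succ (k : ℕ) : y (k + 1) = if k < n₀ then x.1 (k + 1) else g k (y k) := rfl
  have hy_agree : ∀ i ≤ n₀, y i = x.1 i := by
    intro i hi
    induction i with
    | zero => rfl
    | succ k _ => rw [hy_succ, if_pos (by omega)]
  have hy_mem : ∀ n, y n ∈ D n := by
    intro n
    induction n with
    | zero => exact x.2.1 0
    | succ k ih =>
      rw [hy_succ]
      split_ifs
      · exact x.2.1 (k + 1)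
      · exact hgD k _ ih
  have hy_anti : Antitone y := antitone_nat_of_succ_le fun k => by
    rw [hy_succ]
    split_ifs with hk
    · rw [hy_agree k hk.le]; exact x.2.2 k (k + 1) k.le_succ
    · exact hgC k _ (hy_mem k)
  refine ⟨⟨y, hy_mem, fun n m hnm => hy_anti hnm⟩, hy_agree, fun n hn => ?_⟩
  show R n (y n) (y (n + 1))
  rw [hy_succ, if_neg (by omega)]
  exact hgR n _ (hy_mem n)

lemma succ_mem_atomsBelow (x : Kt D) (n : ℕ) : x.1 (n + 1) ∈ atomsBelow D (n + 1) (x.1 n) :=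
  mem_atomsBelow.2 ⟨x.2.1 (n + 1), x.2.2 n (n + 1) n.le_succ⟩

variable [MeasurableSpace Ω] (hpart : IsPartitionSeq D)
include hpart

lemma succ_eq_of_mem (x : Kt D) {n : ℕ} (h : x.1 n ∈ D (n + 1)) : x.1 (n + 1) = x.1 n :=
  hpart.eq_of_subset (x.2.1 (n + 1)) h (hpart.2.1 _ _ (x.2.1 (n + 1))) subset_rfl
    (x.2.2 n (n + 1) n.le_succ)

lemma exists_split {P : Measure Ω} (hA : AssumptionA P D) (x : Kt D) (a : ℕ) :
    ∃ n ≥ a, x.1 n ∉ D (n + 1) := by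
  by_contra! hstay
  have hconst : ∀ n ≥ a, x.1 n = x.1 a := by
    intro n hn
    induction n, hn using Nat.le_induction with
    | base => rfl
    | succ n hn ih => rw [succ_eq_of_mem hpart x (hstay n hn), ih]
  obtain ⟨m, ham, hm⟩ := hA.2 a (x.1 a) (x.2.1 a)
  exact hm (hconst m ham.le ▸ x.2.1 m)

end Kt

def restrictAtoms (D : ℕ → Finset (Set Ω)) (g : ℕ → Set Ω → ℝ) (n : ℕ) (A : Set Ω) : ℝ :=
  if A ∈ D n then g n A else 0

lemma restrictAtoms_of_mem {D : ℕ → Finset (Set Ω)} {g : ℕ → Set Ω → ℝ} {n : ℕ} {A : Set Ω}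
    (hA : A ∈ D n) : restrictAtoms D g n A = g n A :=
  if_pos hA

namespace IsPartitionSeq

variable [MeasurableSpace Ω] {P : Measure Ω} {D : ℕ → Finset (Set Ω)}
  (hpart : IsPartitionSeq D)
include hpart

lemma mval_eq {f : ℕ → Set Ω → ℝ} {n : ℕ} {A : Set Ω} (hA : A ∈ D n) {w : Ω} (hw : w ∈ A) :
    mval D f n w = f n A := by
  rw [mval, Finset.sum_eq_single_of_mem A hA, Set.indicator_of_mem hw]
  intro B hB hne
  exact Set.indicator_of_notMem (Set.disjoint_right.1 (hpart.2.2.1 n hB hA hne) hw) _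

lemma martNorm_top_le {f : ℕ → Set Ω → ℝ} {c : ℝ} (hf : ∀ n, ∀ A ∈ D n, |f n A| ≤ c) :
    martNorm P D ∞ f ≤ ENNReal.ofReal c := by
  refine iSup_le fun n => ?_
  rw [lpNorm, eLpNorm_exponent_top]
  refine eLpNormEssSup_le_of_ae_bound (ae_of_all _ fun w => ?_)
  obtain ⟨A, hA, hw⟩ := hpart.exists_mem n w
  rw [hpart.mval_eq hA hw, Real.norm_eq_abs]
  exact hf n A hA

lemma sum_atomsBelow_eq_of_sum_succ {f : ℕ → Set Ω → ℝ}
    (hsum : ∀ m, ∀ C ∈ D m,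
      ∑ B ∈ atomsBelow D (m + 1) C, P.real B * f (m + 1) B = P.real C * f m C)
    {n m : ℕ} (hnm : n ≤ m) {A : Set Ω} (hA : A ∈ D n) :
    ∑ B ∈ atomsBelow D m A, P.real B * f m B = P.real A * f n A := by
  induction m, hnm using Nat.le_induction with
  | base => rw [hpart.atomsBelow_self hA, Finset.sum_singleton]
  | succ m hnm ih =>
    rw [← hpart.sum_atomsBelow_atomsBelow hnm m.le_succ hA, ← ih]
    exact Finset.sum_congr rfl fun C hC => hsum m C (mem_atomsBelow.1 hC).1

variable [IsFiniteMeasure P]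

lemma setIntegral_mval (f : ℕ → Set Ω → ℝ) {n m : ℕ} (hnm : n ≤ m) {A : Set Ω}
    (hA : A ∈ D n) : ∫ w in A, mval D f m w ∂P = ∑ B ∈ atomsBelow D m A, P.real B * f m B := by
  have hmeas : ∀ B ∈ atomsBelow D m A, MeasurableSet B :=
    fun B hB => hpart.1 m B (mem_atomsBelow.1 hB).1
  have hconst : ∀ B ∈ atomsBelow D m A, Set.EqOn (mval D f m) (fun _ => f m B) B :=
    fun B hB w hw => hpart.mval_eq (mem_atomsBelow.1 hB).1 hw
  conv_lhs => rw [← hpart.biUnion_atomsBelow hnm hA]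
  rw [integral_biUnion_finset _ hmeas
    ((hpart.2.2.1 m).subset fun B hB => (mem_atomsBelow.1 hB).1)
    fun B hB => (integrableOn_const).congr_fun (hconst B hB).symm (hmeas B hB)]
  refine Finset.sum_congr rfl fun B hB => ?_
  rw [setIntegral_congr_fun (hmeas B hB) (hconst B hB), setIntegral_const, smul_eq_mul]

lemma isMart_restrictAtoms {g : ℕ → Set Ω → ℝ}
    (hsum : ∀ m, ∀ C ∈ D m,
      ∑ B ∈ atomsBelow D (m + 1) C, P.real B * g (m + 1) B = P.real C * g m C) :
    IsMart P D (restrictAtoms D g) := by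
  have hrestrict : ∀ m C, ∑ B ∈ atomsBelow D m C, P.real B * restrictAtoms D g m B
      = ∑ B ∈ atomsBelow D m C, P.real B * g m B := fun m C =>
    Finset.sum_congr rfl fun B hB => by rw [restrictAtoms_of_mem (mem_atomsBelow.1 hB).1]
  refine ⟨fun n A hA => if_neg hA, fun n m hnm A hA => ?_⟩
  rw [hpart.setIntegral_mval _ le_rfl hA, hpart.setIntegral_mval _ hnm hA,
    hrestrict n A, hrestrict m A, hpart.sum_atomsBelow_eq_of_sum_succ hsum hnm hA,
    hpart.atomsBelow_self hA, Finset.sum_singleton]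

end IsPartitionSeq

lemma abs_add_mul_one_sub_sq_div_two_lt_one {v a : ℝ} (hv : |v| < 1) (ha : |a| ≤ 1) :
    |v + a * ((1 - v ^ 2) / 2)| < 1 := by
  have hgap : 0 ≤ (1 - v ^ 2) / 2 := by nlinarith [abs_nonneg v, sq_abs v]
  calc |v + a * ((1 - v ^ 2) / 2)| ≤ |v| + |a * ((1 - v ^ 2) / 2)| := abs_add_le _ _
    _ = |v| + |a| * ((1 - v ^ 2) / 2) := by rw [abs_mul, abs_of_nonneg hgap]
    _ ≤ |v| + (1 - |v| ^ 2) / 2 := by rw [sq_abs]; nlinarith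
    _ < 1 := by nlinarith

lemma tendsto_zero_of_frequently_le_sq_div_two {u : ℕ → ℝ} {n₀ : ℕ}
    (hanti : ∀ n ≥ n₀, u (n + 1) ≤ u n) (hnonneg : ∀ n, 0 ≤ u n) (hlt : u n₀ < 2)
    (hfreq : ∃ᶠ n in atTop, u (n + 1) ≤ u n ^ 2 / 2) : Tendsto u atTop (𝓝 0) := by
  have hanti' : Antitone fun k => u (k + n₀) := antitone_nat_of_succ_le fun k => by
    simpa only [add_right_comm k 1 n₀] using hanti (k + n₀) (Nat.le_add_left n₀ k)
  have hlim' := tendsto_atTop_ciInf hanti' ⟨0, by rintro _ ⟨k, rfl⟩; exact hnonneg _⟩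
  obtain ⟨L, hL⟩ : ∃ L, L = ⨅ k, u (k + n₀) := ⟨_, rfl⟩
  rw [← hL] at hlim'
  have hlim : Tendsto u atTop (𝓝 L) := (tendsto_add_atTop_iff_nat n₀).1 hlim'
  have hL0 : 0 ≤ L := ge_of_tendsto' hlim hnonneg
  have hL2 : L < 2 := (hanti'.le_of_tendsto hlim' 0).trans_lt (by simpa using hlt)
  have hLsq : L ≤ L ^ 2 / 2 := le_of_tendsto_of_tendsto_of_frequently
    (hlim.comp (tendsto_add_atTop_nat 1)) ((hlim.pow 2).div_const 2) hfreq
  rwa [show L = 0 by nlinarith] at hlim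

def signOf (b : Bool) : ℝ := if b then 1 else -1

lemma abs_signOf (b : Bool) : |signOf b| = 1 := by cases b <;> simp [signOf]

lemma signOf_mul_self (b : Bool) : signOf b * signOf b = 1 := by cases b <;> simp [signOf]

lemma signOf_mul_of_ne {b σ : Bool} (h : b ≠ σ) : signOf σ * signOf b = -1 := by
  cases b <;> cases σ <;> simp_all [signOf]

section Construction

variable [MeasurableSpace Ω] (P : Measure Ω) (D : ℕ → Finset (Set Ω))

def parentAtom (m : ℕ) (B : Set Ω) : Set Ω :=
  Classical.epsilon fun A => A ∈ D m ∧ B ⊆ A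

def smallChild (m : ℕ) (C : Set Ω) : Set Ω :=
  Classical.epsilon fun B => B ∈ atomsBelow D (m + 1) C ∧ 2 * P.real B ≤ P.real C

def splitFactor (m : ℕ) (C B : Set Ω) : ℝ :=
  if B = smallChild P D m C then 1
  else -(P.real (smallChild P D m C) / (P.real C - P.real (smallChild P D m C)))

/-- The (value, phase) of a child `B` of the atom `C ∈ D m` whose (value, phase) is `st`. -/
def childState (m : ℕ) (C : Set Ω) (st : ℝ × Bool) (B : Set Ω) : ℝ × Bool :=
  if C ∈ D (m + 1) then st
  else (st.1 + signOf st.2 * splitFactor P D m C B * ((1 - st.1 ^ 2) / 2), !st.2)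

variable (N : ℕ) (h : Set Ω → ℝ)

/-- Value and phase on the atoms of `D m` for `m ≥ N`; the levels below `N` only start the
recursion at `(h, true)`. -/
def state : ℕ → Set Ω → ℝ × Bool
  | 0 => fun A => (h A, true)
  | m + 1 => fun B =>
    if m < N then (h B, true)
    else childState P D m (parentAtom D m B) (state m (parentAtom D m B)) B

def value (n : ℕ) (A : Set Ω) : ℝ :=
  if n < N then (∑ B ∈ atomsBelow D N A, P.real B * h B) / P.real A
  else (state P D N h n A).1

/-- The choice of child by which a path through `K` is steered towards `signOf σ`. -/
def IsSteeredStep (σ : Bool) (m : ℕ) (C B : Set Ω) : Prop :=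
  C ∉ D (m + 1) → (B = smallChild P D m C ↔ (state P D N h m C).2 = σ)

end Construction

lemma AssumptionA.measureReal_pos [MeasurableSpace Ω] {P : Measure Ω} [IsFiniteMeasure P]
    {D : ℕ → Finset (Set Ω)} (hA : AssumptionA P D) {n : ℕ} {A : Set Ω} (hAn : A ∈ D n) :
    0 < P.real A :=
  ENNReal.toReal_pos (hA.1 n A hAn).ne' (measure_ne_top P A)

section Properties

variable [MeasurableSpace Ω] {P : Measure Ω} {D : ℕ → Finset (Set Ω)} {N : ℕ} {h : Set Ω → ℝ}

lemma state_of_le {m : ℕ} (hm : m ≤ N) (A : Set Ω) : state P D N h m A = (h A, true) := by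
  cases m with
  | zero => rfl
  | succ m => exact if_pos hm

lemma value_of_ge {n : ℕ} (hn : N ≤ n) (A : Set Ω) : value P D N h n A = (state P D N h n A).1 :=
  if_neg hn.not_gt

lemma value_self (A : Set Ω) : value P D N h N A = h A := by
  rw [value_of_ge le_rfl, state_of_le le_rfl]

namespace IsPartitionSeq

variable (hpart : IsPartitionSeq D)
include hpart

lemma parentAtom_eq {m : ℕ} {B C : Set Ω} (hC : C ∈ D m) (hB : B ∈ atomsBelow D (m + 1) C) :
    parentAtom D m B = C := by
  rw [mem_atomsBelow] at hB
  obtain ⟨hP, hBP⟩ := Classical.epsilon_spec (p := fun A => A ∈ D m ∧ B ⊆ A) ⟨C, hC, hB.2⟩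
  exact hpart.eq_of_subset hP hC (hpart.2.1 _ B hB.1) hBP hB.2

lemma state_succ {m : ℕ} (hm : N ≤ m) {B C : Set Ω} (hC : C ∈ D m)
    (hB : B ∈ atomsBelow D (m + 1) C) :
    state P D N h (m + 1) B = childState P D m C (state P D N h m C) B := by
  simp only [state, if_neg hm.not_gt, hpart.parentAtom_eq hC hB]

section Path

variable (y : Kt D) {m : ℕ} (hm : N ≤ m)
include hm

lemma state_succ_path : state P D N h (m + 1) (y.1 (m + 1))
    = childState P D m (y.1 m) (state P D N h m (y.1 m)) (y.1 (m + 1)) :=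
  hpart.state_succ hm (y.2.1 m) (Kt.succ_mem_atomsBelow y m)

lemma phase_succ_of_mem (hstay : y.1 m ∈ D (m + 1)) :
    (state P D N h (m + 1) (y.1 (m + 1))).2 = (state P D N h m (y.1 m)).2 := by
  rw [hpart.state_succ_path y hm, childState, if_pos hstay]

lemma phase_succ_of_not_mem (hsplit : y.1 m ∉ D (m + 1)) :
    (state P D N h (m + 1) (y.1 (m + 1))).2 = !(state P D N h m (y.1 m)).2 := by
  rw [hpart.state_succ_path y hm, childState, if_neg hsplit]

variable {σ : Bool} (hy : IsSteeredStep P D N h σ m (y.1 m) (y.1 (m + 1)))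
include hy

lemma one_sub_signOf_mul_value_succ (hsplit : y.1 m ∉ D (m + 1))
    (hσ : (state P D N h m (y.1 m)).2 = σ) :
    1 - signOf σ * value P D N h (m + 1) (y.1 (m + 1))
      = (1 - signOf σ * value P D N h m (y.1 m)) ^ 2 / 2 := by
  rw [value_of_ge hm, value_of_ge (hm.trans m.le_succ), hpart.state_succ_path y hm, childState,
    if_neg hsplit, hσ, (hy hsplit).2 hσ, splitFactor, if_pos rfl]
  linear_combination (-1 / 2 : ℝ) * signOf_mul_self σ

end Path

/-- The phase flips exactly at the splits. -/
lemma frequently_split_phase_eq (hA : AssumptionA P D) (y : Kt D) (σ : Bool) :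
    ∃ᶠ m in atTop, y.1 m ∉ D (m + 1) ∧ (state P D N h m (y.1 m)).2 = σ := by
  rw [Filter.frequently_atTop]
  intro a
  by_contra! hbad
  obtain ⟨j, hj, hsplit⟩ := Kt.exists_split hpart hA y (max a N)
  have hphase : ∀ k ≥ j + 1, (state P D N h k (y.1 k)).2 = σ := by
    intro k hk
    induction k, hk using Nat.le_induction with
    | base =>
      rw [hpart.phase_succ_of_not_mem y (by omega) hsplit]
      exact (Bool.eq_not.2 (Ne.symm (hbad j (by omega) hsplit))).symm
    | succ k hk ih =>
      by_cases hstay : y.1 k ∈ D (k + 1)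
      · rwa [hpart.phase_succ_of_mem y (by omega) hstay]
      · exact absurd ih (hbad k (by omega) hstay)
  obtain ⟨k, hk, hsplit'⟩ := Kt.exists_split hpart hA y (j + 1)
  exact hbad k (by omega) hsplit' (hphase k hk)

variable [IsFiniteMeasure P]

lemma smallChild_spec {m : ℕ} {C : Set Ω} (hC : C ∈ D m) (hsplit : C ∉ D (m + 1)) :
    smallChild P D m C ∈ atomsBelow D (m + 1) C ∧ 2 * P.real (smallChild P D m C) ≤ P.real C := by
  refine Classical.epsilon_spec (p := fun B => B ∈ atomsBelow D (m + 1) C ∧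
    2 * P.real B ≤ P.real C) ?_
  have hnt := hpart.nontrivial_atomsBelow hC hsplit
  obtain ⟨B, hB, hmin⟩ := Finset.exists_min_image _ P.real hnt.nonempty
  obtain ⟨B', hB', hne⟩ := hnt.exists_ne B
  have hpair := Finset.add_le_sum (f := P.real) (fun _ _ => measureReal_nonneg) hB hB' hne.symm
  rw [← hpart.measureReal_eq_sum_atomsBelow P m.le_succ hC] at hpair
  exact ⟨B, hB, by linarith [hmin B' hB']⟩

lemma abs_splitFactor_le_one {m : ℕ} {C : Set Ω} (hC : C ∈ D m) (hsplit : C ∉ D (m + 1))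
    (B : Set Ω) : |splitFactor P D m C B| ≤ 1 := by
  have hsmall := (hpart.smallChild_spec (P := P) hC hsplit).2
  have hnonneg : 0 ≤ P.real (smallChild P D m C) := measureReal_nonneg
  unfold splitFactor
  split_ifs
  · simp
  · rw [abs_neg, abs_of_nonneg (div_nonneg hnonneg (by linarith))]
    exact div_le_one_of_le₀ (by linarith) (by linarith)

lemma splitFactor_nonpos {m : ℕ} {C : Set Ω} (hC : C ∈ D m) (hsplit : C ∉ D (m + 1))
    {B : Set Ω} (hB : B ≠ smallChild P D m C) : splitFactor P D m C B ≤ 0 := by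
  have hsmall := (hpart.smallChild_spec (P := P) hC hsplit).2
  have hnonneg : 0 ≤ P.real (smallChild P D m C) := measureReal_nonneg
  rw [splitFactor, if_neg hB, neg_nonpos]
  exact div_nonneg hnonneg (by linarith)

lemma sum_mul_splitFactor {m : ℕ} {C : Set Ω} (hC : C ∈ D m) (hsplit : C ∉ D (m + 1))
    (hpos : 0 < P.real C) :
    ∑ B ∈ atomsBelow D (m + 1) C, P.real B * splitFactor P D m C B = 0 := by
  obtain ⟨hmem, hsmall⟩ := hpart.smallChild_spec (P := P) hC hsplit
  simp only [splitFactor]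
  generalize smallChild P D m C = C₁ at hmem hsmall ⊢
  have hsplitFactor : ∀ B, P.real B * (if B = C₁ then 1 else -(P.real C₁ / (P.real C - P.real C₁)))
      = -(P.real C₁ / (P.real C - P.real C₁)) * P.real B
        + if B = C₁ then P.real B * (1 + P.real C₁ / (P.real C - P.real C₁)) else 0 := by
    intro B; split_ifs <;> ring
  rw [Finset.sum_congr rfl fun B _ => hsplitFactor B, Finset.sum_add_distrib, ← Finset.mul_sum,
    ← hpart.measureReal_eq_sum_atomsBelow P m.le_succ hC, Finset.sum_ite_eq', if_pos hmem]
  have hgap : P.real C - P.real C₁ ≠ 0 := by linarith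
  field_simp
  ring

lemma abs_state_lt_one (hh : ∀ A ∈ D N, |h A| < 1) {n : ℕ} (hn : N ≤ n) :
    ∀ A ∈ D n, |(state P D N h n A).1| < 1 := by
  induction n, hn using Nat.le_induction with
  | base => intro A hA; rw [state_of_le le_rfl]; exact hh A hA
  | succ m hm ih =>
    intro B hB
    obtain ⟨C, hC, hBC⟩ := hpart.2.2.2.2 m B hB
    rw [hpart.state_succ hm hC (mem_atomsBelow.2 ⟨hB, hBC⟩), childState]
    split_ifs with hsplit
    · exact ih C hC
    · refine abs_add_mul_one_sub_sq_div_two_lt_one (ih C hC) ?_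
      rw [abs_mul, abs_signOf, one_mul]
      exact hpart.abs_splitFactor_le_one hC hsplit B

lemma abs_value_le_one (hh : ∀ A ∈ D N, |h A| < 1) (n : ℕ) :
    ∀ A ∈ D n, |value P D N h n A| ≤ 1 := by
  intro A hA
  rcases lt_or_ge n N with hn | hn
  · rw [value, if_pos hn, abs_div, abs_of_nonneg measureReal_nonneg]
    refine div_le_one_of_le₀ ?_ measureReal_nonneg
    calc |∑ B ∈ atomsBelow D N A, P.real B * h B|
        ≤ ∑ B ∈ atomsBelow D N A, P.real B * |h B| := by
          refine (Finset.abs_sum_le_sum_abs _ _).trans_eq (Finset.sum_congr rfl fun B _ => ?_)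
          rw [abs_mul, abs_of_nonneg measureReal_nonneg]
      _ ≤ ∑ B ∈ atomsBelow D N A, P.real B := Finset.sum_le_sum fun B hB =>
          mul_le_of_le_one_right measureReal_nonneg (hh B (mem_atomsBelow.1 hB).1).le
      _ = P.real A := (hpart.measureReal_eq_sum_atomsBelow P hn.le hA).symm
  · rw [value_of_ge hn]
    exact (hpart.abs_state_lt_one hh hn A hA).le

lemma mul_value_of_le (hA : AssumptionA P D) {n : ℕ} (hn : n ≤ N) {A : Set Ω} (hAn : A ∈ D n) :
    P.real A * value P D N h n A = ∑ B ∈ atomsBelow D N A, P.real B * h B := by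
  rcases hn.lt_or_eq with hn | rfl
  · rw [value, if_pos hn, mul_div_cancel₀ _ (hA.measureReal_pos hAn).ne']
  · rw [value_self, hpart.atomsBelow_self hAn, Finset.sum_singleton]

lemma sum_value_succ (hA : AssumptionA P D) (m : ℕ) :
    ∀ C ∈ D m, ∑ B ∈ atomsBelow D (m + 1) C, P.real B * value P D N h (m + 1) B
      = P.real C * value P D N h m C := by
  intro C hC
  rcases lt_or_ge m N with hm | hm
  · rw [Finset.sum_congr rfl fun B hB => hpart.mul_value_of_le hA hm (mem_atomsBelow.1 hB).1,
      hpart.sum_atomsBelow_atomsBelow m.le_succ hm hC, hpart.mul_value_of_le hA hm.le hC]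
  rw [Finset.sum_congr rfl fun B hB => by
    rw [value_of_ge (hm.trans m.le_succ), hpart.state_succ hm hC hB], value_of_ge hm]
  by_cases hsplit : C ∈ D (m + 1)
  · simp only [childState, if_pos hsplit, hpart.atomsBelow_self hsplit, Finset.sum_singleton]
  simp only [childState, if_neg hsplit]
  set v := (state P D N h m C).1
  set s := signOf (state P D N h m C).2
  have hsplitFactor : ∀ B, P.real B * (v + s * splitFactor P D m C B * ((1 - v ^ 2) / 2))
      = v * P.real B + s * ((1 - v ^ 2) / 2) * (P.real B * splitFactor P D m C B) := by
    intro B; ring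
  rw [Finset.sum_congr rfl fun B _ => hsplitFactor B, Finset.sum_add_distrib, ← Finset.mul_sum,
    ← Finset.mul_sum, ← hpart.measureReal_eq_sum_atomsBelow P m.le_succ hC,
    hpart.sum_mul_splitFactor hC hsplit (hA.measureReal_pos hC)]
  ring

lemma exists_isSteeredStep (σ : Bool) :
    ∀ m, ∀ C ∈ D m, ∃ B ∈ D (m + 1), B ⊆ C ∧ IsSteeredStep P D N h σ m C B := by
  intro m C hC
  by_cases hsplit : C ∈ D (m + 1)
  · exact ⟨C, hsplit, subset_rfl, fun hns => absurd hsplit hns⟩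
  by_cases hσ : (state P D N h m C).2 = σ
  · obtain ⟨hB, -⟩ := hpart.smallChild_spec (P := P) hC hsplit
    rw [mem_atomsBelow] at hB
    exact ⟨_, hB.1, hB.2, fun _ => iff_of_true rfl hσ⟩
  · obtain ⟨B, hB, hne⟩ := (hpart.nontrivial_atomsBelow hC hsplit).exists_ne (smallChild P D m C)
    rw [mem_atomsBelow] at hB
    exact ⟨B, hB.1, hB.2, fun _ => iff_of_false hne hσ⟩

lemma signOf_mul_value_le_succ (hh : ∀ A ∈ D N, |h A| < 1) (y : Kt D) {m : ℕ} (hm : N ≤ m)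
    {σ : Bool} (hy : IsSteeredStep P D N h σ m (y.1 m) (y.1 (m + 1))) :
    signOf σ * value P D N h m (y.1 m) ≤ signOf σ * value P D N h (m + 1) (y.1 (m + 1)) := by
  rw [value_of_ge hm, value_of_ge (hm.trans m.le_succ), hpart.state_succ_path y hm, childState]
  split_ifs with hstay
  · exact le_rfl
  dsimp only
  have hv := hpart.abs_state_lt_one (P := P) hh hm _ (y.2.1 m)
  have hgap : 0 ≤ (1 - (state P D N h m (y.1 m)).1 ^ 2) / 2 := by
    nlinarith [abs_nonneg (state P D N h m (y.1 m)).1, sq_abs (state P D N h m (y.1 m)).1]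
  by_cases hσ : (state P D N h m (y.1 m)).2 = σ
  · rw [hσ, (hy hstay).2 hσ, splitFactor, if_pos rfl]
    set v := (state P D N h m (y.1 m)).1
    have hgain : signOf σ * (v + signOf σ * 1 * ((1 - v ^ 2) / 2))
        = signOf σ * v + (1 - v ^ 2) / 2 := by
      linear_combination (1 - v ^ 2) / 2 * signOf_mul_self σ
    linarith
  · have hφ := hpart.splitFactor_nonpos (P := P) (y.2.1 m) hstay (mt (hy hstay).1 hσ)
    set v := (state P D N h m (y.1 m)).1
    set φ := splitFactor P D m (y.1 m) (y.1 (m + 1))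
    have hgain : signOf σ * (v + signOf (state P D N h m (y.1 m)).2 * φ * ((1 - v ^ 2) / 2))
        = signOf σ * v - φ * ((1 - v ^ 2) / 2) := by
      linear_combination φ * ((1 - v ^ 2) / 2) * signOf_mul_of_ne hσ
    nlinarith

lemma tendsto_value_of_steered (hA : AssumptionA P D) (hh : ∀ A ∈ D N, |h A| < 1) {σ : Bool}
    (y : Kt D) {n₀ : ℕ} (hn₀ : N ≤ n₀)
    (hy : ∀ m ≥ n₀, IsSteeredStep P D N h σ m (y.1 m) (y.1 (m + 1))) :
    Tendsto (fun n => value P D N h n (y.1 n)) atTop (𝓝 (signOf σ)) := by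
  have hbound (n : ℕ) : |signOf σ * value P D N h n (y.1 n)| ≤ 1 := by
    rw [abs_mul, abs_signOf, one_mul]
    exact hpart.abs_value_le_one hh n _ (y.2.1 n)
  have hstart : |signOf σ * value P D N h n₀ (y.1 n₀)| < 1 := by
    rw [abs_mul, abs_signOf, one_mul, value_of_ge hn₀]
    exact hpart.abs_state_lt_one hh hn₀ _ (y.2.1 n₀)
  have hfav : ∃ᶠ m in atTop, 1 - signOf σ * value P D N h (m + 1) (y.1 (m + 1))
      ≤ (1 - signOf σ * value P D N h m (y.1 m)) ^ 2 / 2 :=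
    (hpart.frequently_split_phase_eq hA y σ).mp <| (eventually_ge_atTop n₀).mono
      fun m hm ⟨hsplit, hσ⟩ =>
        (hpart.one_sub_signOf_mul_value_succ y (hn₀.trans hm) (hy m hm) hsplit hσ).le
  have hgap : Tendsto (fun n => 1 - signOf σ * value P D N h n (y.1 n)) atTop (𝓝 0) :=
    tendsto_zero_of_frequently_le_sq_div_two (n₀ := n₀)
      (fun m hm => by
        linarith [hpart.signOf_mul_value_le_succ hh y (hn₀.trans hm) (hy m hm)])
      (fun n => by linarith [(abs_le.1 (hbound n)).2]) (by linarith [(abs_lt.1 hstart).1]) hfav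
  have hlim := (tendsto_const_nhds (x := 1).sub hgap).const_mul (signOf σ)
  simp only [sub_sub_cancel, sub_zero, mul_one, ← mul_assoc, signOf_mul_self, one_mul] at hlim
  exact hlim

lemma dense_tendsto_restrictAtoms_value (hA : AssumptionA P D) (hh : ∀ A ∈ D N, |h A| < 1)
    (σ : Bool) :
    Dense {x : Kt D | Tendsto (fun n => restrictAtoms D (value P D N h) n (x.1 n)) atTop
      (𝓝 (signOf σ))} := by
  refine Kt.dense_of_forall_eventually_agree fun x => ?_
  filter_upwards [eventually_ge_atTop N] with n₀ hn₀
  obtain ⟨y, hyx, hy⟩ := Kt.exists_agree_of_forall_exists_succ _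
    (hpart.exists_isSteeredStep (P := P) (N := N) (h := h) σ) x n₀
  exact ⟨y, (hpart.tendsto_value_of_steered hA hh y hn₀ hy).congr
    fun n => (restrictAtoms_of_mem (y.2.1 n)).symm, hyx⟩

end IsPartitionSeq

end Properties

/-- Lemma (l:infty): given `N` and `h ∈ L^∞(Σ_N)` (represented by its values on the atoms
of `D N`) with `‖h‖_∞ < 1`, there is a martingale `f` adapted to the filtration with
(a) `f_N = h`, (b) `‖f‖_∞ ≤ 1`, (c) `lim f_n(x) = 1` on a dense subset of `K` and
(d) `lim f_n(x) = -1` on a dense subset of `K`. -/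
theorem statement17 [MeasurableSpace Ω] (P : Measure Ω) [IsProbabilityMeasure P]
    (D : ℕ → Finset (Set Ω)) (hpart : IsPartitionSeq D) (hA : AssumptionA P D)
    (N : ℕ) (h : Set Ω → ℝ) (hh : ∀ A ∈ D N, |h A| < 1) :
    ∃ f : ℕ → Set Ω → ℝ, IsMart P D f ∧
      (∀ A ∈ D N, f N A = h A) ∧
      martNorm P D ∞ f ≤ 1 ∧
      Dense {x : Kt D | Filter.Tendsto (fun n => f n (x.1 n)) Filter.atTop (nhds 1)} ∧
      Dense {x : Kt D | Filter.Tendsto (fun n => f n (x.1 n)) Filter.atTop (nhds (-1))} := by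
  refine ⟨restrictAtoms D (value P D N h), hpart.isMart_restrictAtoms (hpart.sum_value_succ hA),
    fun A hAN => (restrictAtoms_of_mem hAN).trans (value_self A), ?_,
    hpart.dense_tendsto_restrictAtoms_value hA hh true,
    hpart.dense_tendsto_restrictAtoms_value hA hh false⟩
  simpa using hpart.martNorm_top_le (P := P) (c := 1) fun n A hAn => by
    rw [restrictAtoms_of_mem hAn]
    exact hpart.abs_value_le_one hh n A hAn

end MartingalePaper
end
end

section
/- Let f = (f_n) ∈ M_1, let η > 0 and ω > 0, let n ∈ ℕ and E ∈ D_n be given. Then there exist g = (g_k) ∈ M_1, m ∈ ℕ and F ∈ D_m such that: (a) g_1 = … = g_n = 0; (b) ‖g‖_1 < η; (c) m > n and F ⊆ E; (d) (f_m + g_m)(F) > ω, where (f_m + g_m)(F) = (1/P(F)) ∫_F (f_m + g_m) dP. -/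
/-!
For an atom `A ∈ D k` call `∫_A (f_k - w) dP = (f_k(A) - w) P(A)` the excess of `A`. By the
martingale property it is the sum of the excesses of the atoms into which `A` splits later, and by
(A) every atom eventually splits into at least two. The child with the largest excess therefore
keeps half of any nonpositive lower bound for the excess of `A`, and after enough splits below `E`
we reach an atom `F ∈ D (l + 1)` with parent `Fp ∈ D l`, `P(Fp \ F) > 0`, and excess `≥ -η/8`.

The correction `g` vanishes up to time `l` and from then on equals `c` on `F` and
`-c P(F) / P(Fp \ F)` on `Fp \ F`. Having mean zero on `Fp`, it is a martingale of norm
`2 c P(F)`, and `c = (w - f_{l+1}(F))⁺ + η/8` gives both `f_{l+1}(F) + c > w` and, because the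
excess of `F` is `≥ -η/8` and `P(F) ≤ 1`, `c P(F) ≤ η/4`.
-/
open MeasureTheory Filter Set
open scoped ENNReal Topology

noncomputable section

namespace MartingalePaper

variable {Ω : Type}

open Classical in
def children (D : ℕ → Finset (Set Ω)) (k : ℕ) (A : Set Ω) : Finset (Set Ω) :=
  {B ∈ D k | B ⊆ A}

lemma mem_children {D : ℕ → Finset (Set Ω)} {k : ℕ} {A B : Set Ω} :
    B ∈ children D k A ↔ B ∈ D k ∧ B ⊆ A := by
  classical
  simp [children]

lemma exists_le_and_not_succ {p : ℕ → Prop} {j m : ℕ} (hjm : j ≤ m) (hj : p j) (hm : ¬ p m) :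
    ∃ l, j ≤ l ∧ p l ∧ ¬ p (l + 1) := by
  induction m, hjm using Nat.le_induction with
  | base => exact absurd hj hm
  | succ m hjm ih =>
    by_cases h : p m
    · exact ⟨m, hjm, h, hm⟩
    · exact ih h

lemma exists_half_le_of_le_sum {ι : Type*} {s : Finset ι} (hs : 2 ≤ s.card) (φ : ι → ℝ)
    {a : ℝ} (ha : a ≤ 0) (hsum : a ≤ ∑ i ∈ s, φ i) : ∃ i ∈ s, a / 2 ≤ φ i := by
  by_contra! h
  have hlt := Finset.sum_lt_sum_of_nonempty (Finset.card_pos.1 (by omega)) h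
  rw [Finset.sum_const, nsmul_eq_mul] at hlt
  have hs' : (2 : ℝ) ≤ s.card := by exact_mod_cast hs
  nlinarith

namespace IsPartitionSeq

variable [MeasurableSpace Ω] {D : ℕ → Finset (Set Ω)}

lemma exists_superset_of_le (hD : IsPartitionSeq D) {j k : ℕ} (hjk : j ≤ k) {B : Set Ω}
    (hB : B ∈ D k) : ∃ A ∈ D j, B ⊆ A := by
  induction k, hjk using Nat.le_induction generalizing B with
  | base => exact ⟨B, hB, subset_rfl⟩
  | succ k _ ih =>
    obtain ⟨C, hC, hBC⟩ := hD.2.2.2.2 k B hB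
    obtain ⟨A, hA, hCA⟩ := ih hC
    exact ⟨A, hA, hBC.trans hCA⟩

lemma eq_of_mem_of_mem (hD : IsPartitionSeq D) {k : ℕ} {A B : Set Ω} (hA : A ∈ D k)
    (hB : B ∈ D k) {x : Ω} (hxA : x ∈ A) (hxB : x ∈ B) : A = B :=
  by_contra fun h => disjoint_left.1 (hD.2.2.1 k hA hB h) hxA hxB

lemma exists_mem_s18 (hD : IsPartitionSeq D) (k : ℕ) (x : Ω) : ∃ B ∈ D k, x ∈ B := by
  simpa using (hD.2.2.2.1 k).ge (mem_univ x)

lemma subset_or_disjoint (hD : IsPartitionSeq D) {j k : ℕ} (hjk : j ≤ k) {A B : Set Ω}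
    (hA : A ∈ D j) (hB : B ∈ D k) : B ⊆ A ∨ Disjoint B A := by
  obtain ⟨A', hA', hBA'⟩ := hD.exists_superset_of_le hjk hB
  rcases eq_or_ne A' A with rfl | hne
  · exact Or.inl hBA'
  · exact Or.inr ((hD.2.2.1 j hA' hA hne).mono_left hBA')

lemma pairwiseDisjoint_children (hD : IsPartitionSeq D) (k : ℕ) (A : Set Ω) :
    (children D k A : Set (Set Ω)).PairwiseDisjoint id :=
  (hD.2.2.1 k).subset fun _ hB => (mem_children.1 hB).1

lemma biUnion_children (hD : IsPartitionSeq D) {j k : ℕ} (hjk : j ≤ k) {A : Set Ω}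
    (hA : A ∈ D j) : ⋃ B ∈ children D k A, B = A := by
  refine Subset.antisymm (iUnion₂_subset fun B hB => (mem_children.1 hB).2) fun x hx => ?_
  obtain ⟨B, hB, hxB⟩ := hD.exists_mem_s18 k x
  rcases hD.subset_or_disjoint hjk hA hB with hBA | hBA
  · exact mem_iUnion₂.2 ⟨B, mem_children.2 ⟨hB, hBA⟩, hxB⟩
  · exact absurd hx (disjoint_left.1 hBA hxB)

lemma two_le_card_children (hD : IsPartitionSeq D) {l : ℕ} {A : Set Ω} (hA : A ∈ D l)
    (hA' : A ∉ D (l + 1)) : 2 ≤ (children D (l + 1) A).card := by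
  by_contra! hcard
  have hne : (children D (l + 1) A).Nonempty := by
    obtain ⟨x, hx⟩ := hD.2.1 l A hA
    rw [← hD.biUnion_children l.le_succ hA] at hx
    obtain ⟨B, hB, -⟩ := mem_iUnion₂.1 hx
    exact ⟨B, hB⟩
  obtain ⟨B, hB⟩ := Finset.card_eq_one.1 (le_antisymm (by omega) hne.card_pos)
  have hAB : B = A := by simpa [hB] using hD.biUnion_children l.le_succ hA
  exact hA' (hAB ▸ (mem_children.1 (hB ▸ Finset.mem_singleton_self B)).1)

lemma mval_eq_of_mem (hD : IsPartitionSeq D) (f : ℕ → Set Ω → ℝ) {k : ℕ} {B : Set Ω}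
    (hB : B ∈ D k) {x : Ω} (hx : x ∈ B) : mval D f k x = f k B := by
  rw [mval, Finset.sum_eq_single B
    (fun A hA hAB => indicator_of_notMem (fun hxA => hAB (hD.eq_of_mem_of_mem hA hB hxA hx)) _)
    (fun h => absurd hB h), indicator_of_mem hx]

variable {P : Measure Ω}

lemma setIntegral_mval_self (hD : IsPartitionSeq D) (f : ℕ → Set Ω → ℝ) {k : ℕ} {A : Set Ω}
    (hA : A ∈ D k) : ∫ x in A, mval D f k x ∂P = f k A * P.real A := by
  rw [setIntegral_congr_fun (hD.1 k A hA) fun x hx => hD.mval_eq_of_mem f hA hx,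
    setIntegral_const, smul_eq_mul, mul_comm]

variable [IsFiniteMeasure P]

lemma integrable_mval (hD : IsPartitionSeq D) (f : ℕ → Set Ω → ℝ) (k : ℕ) :
    Integrable (mval D f k) P :=
  integrable_finsetSum _ fun A hA => (integrable_const _).indicator (hD.1 k A hA)

lemma setIntegral_mval_of_le (hD : IsPartitionSeq D) (f : ℕ → Set Ω → ℝ) {j k : ℕ}
    (hjk : j ≤ k) {A : Set Ω} (hA : A ∈ D j) :
    ∫ x in A, mval D f k x ∂P = ∑ B ∈ children D k A, f k B * P.real B := by
  conv_lhs => rw [← hD.biUnion_children hjk hA]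
  rw [integral_biUnion_finset _ (fun B hB => hD.1 k B (mem_children.1 hB).1)
    (hD.pairwiseDisjoint_children k A) fun _ _ => (hD.integrable_mval f k).integrableOn]
  exact Finset.sum_congr rfl fun B hB => hD.setIntegral_mval_self f (mem_children.1 hB).1

lemma sum_measureReal_children (hD : IsPartitionSeq D) {j k : ℕ} (hjk : j ≤ k) {A : Set Ω}
    (hA : A ∈ D j) : ∑ B ∈ children D k A, P.real B = P.real A := by
  conv_rhs => rw [← hD.biUnion_children hjk hA]
  exact (measureReal_biUnion_finset (hD.pairwiseDisjoint_children k A)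
    fun B hB => hD.1 k B (mem_children.1 hB).1).symm

end IsPartitionSeq

section Selection

variable [MeasurableSpace Ω] {P : Measure Ω} {D : ℕ → Finset (Set Ω)} {f : ℕ → Set Ω → ℝ}

def excess (P : Measure Ω) (f : ℕ → Set Ω → ℝ) (w : ℝ) (k : ℕ) (A : Set Ω) : ℝ :=
  (f k A - w) * P.real A

lemma IsMart.excess_eq_sum_children [IsFiniteMeasure P] (hD : IsPartitionSeq D)
    (hf : IsMart P D f) (w : ℝ) {j k : ℕ} (hjk : j ≤ k) {A : Set Ω} (hA : A ∈ D j) :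
    excess P f w j A = ∑ B ∈ children D k A, excess P f w k B := by
  have hmart := hf.2 j k hjk A hA
  rw [hD.setIntegral_mval_self f hA, hD.setIntegral_mval_of_le f hjk hA] at hmart
  simp only [excess, sub_mul, Finset.sum_sub_distrib, ← Finset.mul_sum,
    hD.sum_measureReal_children hjk hA, hmart]

variable [IsFiniteMeasure P]

lemma exists_child_excess_ge (hD : IsPartitionSeq D) (hA : AssumptionA P D) (hf : IsMart P D f)
    (w : ℝ) {j : ℕ} {A : Set Ω} (hAj : A ∈ D j) {a : ℝ} (ha : a ≤ 0)
    (haA : a ≤ excess P f w j A) :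
    ∃ l, j ≤ l ∧ A ∈ D l ∧ ∃ B ∈ D (l + 1), B ⊆ A ∧ 0 < P (A \ B) ∧
      a / 2 ≤ excess P f w (l + 1) B := by
  obtain ⟨m, hjm, hAm⟩ := hA.2 j A hAj
  obtain ⟨l, hjl, hAl, hAl'⟩ := exists_le_and_not_succ (p := (A ∈ D ·)) hjm.le hAj hAm
  have hcard := hD.two_le_card_children hAl hAl'
  rw [hf.excess_eq_sum_children hD w (hjl.trans l.le_succ) hAj] at haA
  obtain ⟨B, hB, hBa⟩ := exists_half_le_of_le_sum hcard _ ha haA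
  obtain ⟨C, hC, hCB⟩ := Finset.exists_mem_ne hcard B
  obtain ⟨hBD, hBA⟩ := mem_children.1 hB
  obtain ⟨hCD, hCA⟩ := mem_children.1 hC
  have hCsub : C ⊆ A \ B := subset_sdiff.2 ⟨hCA, hD.2.2.1 _ hCD hBD hCB⟩
  exact ⟨l, hjl, hAl, B, hBD, hBA, (hA.1 _ C hCD).trans_le (measure_mono hCsub), hBa⟩

lemma exists_descendant_excess_ge (hD : IsPartitionSeq D) (hA : AssumptionA P D)
    (hf : IsMart P D f) (w : ℝ) (k : ℕ) {j : ℕ} {A : Set Ω} (hAj : A ∈ D j) {a : ℝ}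
    (ha : a ≤ 0) (haA : a ≤ excess P f w j A) :
    ∃ l, j ≤ l ∧ ∃ Fp ∈ D l, Fp ⊆ A ∧ ∃ F ∈ D (l + 1), F ⊆ Fp ∧ 0 < P (Fp \ F) ∧
      a / 2 ^ (k + 1) ≤ excess P f w (l + 1) F := by
  induction k generalizing j A a with
  | zero =>
    obtain ⟨l, hjl, hAl, B, hB, hBA, hpos, hBa⟩ := exists_child_excess_ge hD hA hf w hAj ha haA
    exact ⟨l, hjl, A, hAl, subset_rfl, B, hB, hBA, hpos, by simpa using hBa⟩
  | succ k ih =>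
    obtain ⟨l₁, hjl₁, -, B, hB, hBA, -, hBa⟩ := exists_child_excess_ge hD hA hf w hAj ha haA
    obtain ⟨l, hl, Fp, hFp, hFpB, F, hF, hFFp, hpos, hFa⟩ := ih hB (by linarith) hBa
    refine ⟨l, by omega, Fp, hFp, hFpB.trans hBA, F, hF, hFFp, hpos, ?_⟩
    rwa [pow_succ' 2 (k + 1), ← div_div]

lemma exists_excess_ge_neg (hD : IsPartitionSeq D) (hA : AssumptionA P D) (hf : IsMart P D f)
    (w : ℝ) {n : ℕ} {E : Set Ω} (hE : E ∈ D n) {ε : ℝ} (hε : 0 < ε) :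
    ∃ l, n ≤ l ∧ ∃ Fp ∈ D l, Fp ⊆ E ∧ ∃ F ∈ D (l + 1), F ⊆ Fp ∧ 0 < P (Fp \ F) ∧
      -ε ≤ excess P f w (l + 1) F := by
  set a := min 0 (excess P f w n E)
  obtain ⟨k, hk⟩ := pow_unbounded_of_one_lt (-a / ε) one_lt_two
  obtain ⟨l, hnl, Fp, hFp, hFpE, F, hF, hFFp, hpos, hFa⟩ :=
    exists_descendant_excess_ge hD hA hf w k hE (min_le_left _ _) (min_le_right _ _)
  refine ⟨l, hnl, Fp, hFp, hFpE, F, hF, hFFp, hpos, le_trans ?_ hFa⟩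
  rw [div_lt_iff₀ hε] at hk
  have hpow : (2 : ℝ) ^ k ≤ 2 ^ (k + 1) := pow_le_pow_right₀ one_le_two k.le_succ
  rw [le_div_iff₀ (by positivity)]
  nlinarith

end Selection

section Correction

variable {D : ℕ → Finset (Set Ω)}

open Classical in
def correction (D : ℕ → Finset (Set Ω)) (l : ℕ) (F Fp : Set Ω) (c v : ℝ) :
    ℕ → Set Ω → ℝ := fun k A =>
  if l < k ∧ A ∈ D k then (if A ⊆ F then c else if A ⊆ Fp then v else 0) else 0

variable {l : ℕ} {F Fp : Set Ω} {c v : ℝ}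

lemma correction_of_le {k : ℕ} (hk : k ≤ l) (A : Set Ω) : correction D l F Fp c v k A = 0 := by
  simp [correction, hk.not_gt]

lemma mval_correction_of_le {k : ℕ} (hk : k ≤ l) : mval D (correction D l F Fp c v) k = 0 := by
  funext x
  simp [mval, correction_of_le hk]

variable [MeasurableSpace Ω] {P : Measure Ω}

lemma isMart_of_mval_eq {g : ℕ → Set Ω → ℝ} {h : Ω → ℝ} {l : ℕ}
    (hsupp : ∀ k A, A ∉ D k → g k A = 0) (hlow : ∀ k ≤ l, mval D g k = 0)
    (hhigh : ∀ k, l < k → mval D g k = h) (hint : ∀ j ≤ l, ∀ A ∈ D j, ∫ x in A, h x ∂P = 0) :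
    IsMart P D g := by
  refine ⟨hsupp, fun j k hjk A hA => ?_⟩
  rcases le_or_gt k l with hkl | hlk
  · rw [hlow j (hjk.trans hkl), hlow k hkl]
  rcases le_or_gt j l with hjl | hlj
  · rw [hlow j hjl, hhigh k hlk, hint j hjl A hA]
    exact integral_zero _ _
  · rw [hhigh j hlj, hhigh k hlk]

lemma mval_correction_of_lt (hD : IsPartitionSeq D) (hF : F ∈ D (l + 1)) (hFp : Fp ∈ D l)
    {k : ℕ} (hk : l < k) :
    mval D (correction D l F Fp c v) k =
      F.indicator (fun _ => c) + (Fp \ F).indicator (fun _ => v) := by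
  funext x
  obtain ⟨B, hB, hxB⟩ := hD.exists_mem_s18 k x
  rw [hD.mval_eq_of_mem _ hB hxB]
  simp only [correction, hk, hB, and_self, if_true, Pi.add_apply]
  rcases hD.subset_or_disjoint hk hF hB with hBF | hBF
  · simp [hBF, hBF hxB]
  have hxF : x ∉ F := disjoint_left.1 hBF hxB
  have hBF' : ¬ B ⊆ F := fun h => hxF (h hxB)
  rcases hD.subset_or_disjoint hk.le hFp hB with hBFp | hBFp
  · simp [hBF', hBFp, hxF, hBFp hxB]
  · have hxFp : x ∉ Fp := disjoint_left.1 hBFp hxB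
    have hBFp' : ¬ B ⊆ Fp := fun h => hxFp (h hxB)
    simp [hBF', hBFp', hxF, hxFp]

lemma isMart_correction [IsFiniteMeasure P] (hD : IsPartitionSeq D) (hF : F ∈ D (l + 1))
    (hFp : Fp ∈ D l) (hFFp : F ⊆ Fp) (hcv : c * P.real F + v * P.real (Fp \ F) = 0) :
    IsMart P D (correction D l F Fp c v) := by
  set h := F.indicator (fun _ => c) + (Fp \ F).indicator (fun _ => v)
  have hmF := hD.1 _ F hF
  have hmFp := hD.1 _ Fp hFp
  have hzero : ∀ x ∉ Fp, h x = 0 := fun x hx => by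
    have hxF : x ∉ F := fun hxF => hx (hFFp hxF)
    simp [h, hxF, hx]
  have hmean : ∫ x, h x ∂P = 0 := by
    simp only [h, Pi.add_apply]
    rw [integral_add ((integrable_const c).indicator hmF)
      ((integrable_const v).indicator (hmFp.diff hmF)), integral_indicator_const _ hmF,
      integral_indicator_const _ (hmFp.diff hmF), smul_eq_mul, smul_eq_mul,
      mul_comm, mul_comm (P.real _), hcv]
  refine isMart_of_mval_eq (fun k A hA => by simp [correction, hA])
    (fun k hk => mval_correction_of_le hk) (fun k hk => mval_correction_of_lt hD hF hFp hk)
    fun j hj A hA => ?_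
  rcases hD.subset_or_disjoint hj hA hFp with hFpA | hFpA
  · rw [setIntegral_eq_integral_of_forall_compl_eq_zero fun x hx => hzero x (hx ∘ (hFpA ·)),
      hmean]
  · exact setIntegral_eq_zero_of_forall_eq_zero fun x hx => hzero x (disjoint_right.1 hFpA hx)

lemma martNorm_correction_le [IsFiniteMeasure P] (hD : IsPartitionSeq D) (hF : F ∈ D (l + 1))
    (hFp : Fp ∈ D l) (hcv : c * P.real F + v * P.real (Fp \ F) = 0) :
    martNorm P D 1 (correction D l F Fp c v) ≤ ENNReal.ofReal (2 * |c| * P.real F) := by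
  have hmF := hD.1 _ F hF
  have hmD := (hD.1 _ Fp hFp).diff hmF
  have hv : |v| * P.real (Fp \ F) = |c| * P.real F := by
    rw [← abs_of_nonneg (measureReal_nonneg (μ := P) (s := Fp \ F)), ← abs_mul,
      eq_neg_of_add_eq_zero_right hcv, abs_neg, abs_mul, abs_of_nonneg measureReal_nonneg]
  rw [show 2 * |c| * P.real F = |c| * P.real F + |v| * P.real (Fp \ F) by rw [hv]; ring]
  refine iSup_le fun k => ?_
  rcases le_or_gt k l with hk | hk
  · simp [lpNorm, mval_correction_of_le hk]
  rw [lpNorm, mval_correction_of_lt hD hF hFp hk]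
  refine (eLpNorm_add_le (stronglyMeasurable_const.indicator hmF).aestronglyMeasurable
    (stronglyMeasurable_const.indicator hmD).aestronglyMeasurable le_rfl).trans_eq ?_
  rw [eLpNorm_indicator_const hmF one_ne_zero ENNReal.one_ne_top,
    eLpNorm_indicator_const hmD one_ne_zero ENNReal.one_ne_top,
    ENNReal.ofReal_add (by positivity) (by positivity), ENNReal.ofReal_mul (abs_nonneg _),
    ENNReal.ofReal_mul (abs_nonneg _), ofReal_measureReal, ofReal_measureReal,
    ← Real.enorm_eq_ofReal_abs, ← Real.enorm_eq_ofReal_abs]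
  simp

end Correction

theorem statement18_general [MeasurableSpace Ω] (P : Measure Ω) [IsProbabilityMeasure P]
    (D : ℕ → Finset (Set Ω)) (hpart : IsPartitionSeq D) (hA : AssumptionA P D)
    (f : ℕ → Set Ω → ℝ) (hf : IsMart P D f)
    (η w : ℝ) (hη : 0 < η) (n : ℕ) (E : Set Ω) (hE : E ∈ D n) :
    ∃ g : ℕ → Set Ω → ℝ, IsMart P D g ∧ martNorm P D 1 g ≠ ∞ ∧
      (∀ k ≤ n, ∀ A : Set Ω, g k A = 0) ∧
      martNorm P D 1 g < ENNReal.ofReal η ∧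
      ∃ m : ℕ, n < m ∧ ∃ F ∈ D m, F ⊆ E ∧ f m F + g m F > w := by
  obtain ⟨l, hnl, Fp, hFp, hFpE, F, hF, hFFp, hpos, hexcess⟩ :=
    exists_excess_ge_neg hpart hA hf w hE (ε := η / 8) (by positivity)
  have hPF : 0 < P.real F := ENNReal.toReal_pos (hA.1 _ F hF).ne' (measure_ne_top P F)
  have hPd : 0 < P.real (Fp \ F) := ENNReal.toReal_pos hpos.ne' (measure_ne_top P _)
  set c := max (w - f (l + 1) F) 0 + η / 8 with hc
  set v := -(c * P.real F / P.real (Fp \ F))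
  have hcv : c * P.real F + v * P.real (Fp \ F) = 0 := by
    simp only [v, neg_mul, div_mul_cancel₀ _ hPd.ne', add_neg_cancel]
  have hcF : c * P.real F ≤ η / 4 := by
    have hexcess' : -(η / 8) ≤ (f (l + 1) F - w) * P.real F := hexcess
    have hmax : max (w - f (l + 1) F) 0 * P.real F ≤ η / 8 := by
      rw [max_mul_of_nonneg _ _ hPF.le, zero_mul]
      exact max_le (by linarith) (by positivity)
    nlinarith [measureReal_le_one (μ := P) (s := F)]
  have hnorm : martNorm P D 1 (correction D l F Fp c v) < ENNReal.ofReal η := by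
    refine (martNorm_correction_le hpart hF hFp hcv).trans_lt
      ((ENNReal.ofReal_lt_ofReal_iff hη).2 ?_)
    rw [abs_of_pos (by positivity)]
    linarith
  refine ⟨correction D l F Fp c v, isMart_correction hpart hF hFp hFFp hcv, hnorm.ne_top,
    fun k hk => correction_of_le (hk.trans hnl), hnorm, l + 1, by omega, F, hF, hFFp.trans hFpE, ?_⟩
  simp only [correction, lt_add_one, hF, and_self, if_true, subset_rfl]
  linarith [le_max_left (w - f (l + 1) F) 0]

/-- Lemma (l:klicove): let `f ∈ M₁`, `η, w > 0`, `n ∈ ℕ` and `E ∈ D n`. Then there are a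
martingale `g ∈ M₁`, `m ∈ ℕ` and `F ∈ D m` with (a) `g_1 = … = g_n = 0`, (b) `‖g‖₁ < η`,
(c) `m > n` and `F ⊆ E`, and (d) `(f_m + g_m)(F) > w`. -/
theorem statement18 [MeasurableSpace Ω] (P : Measure Ω) [IsProbabilityMeasure P]
    (D : ℕ → Finset (Set Ω)) (hpart : IsPartitionSeq D) (hA : AssumptionA P D)
    (f : ℕ → Set Ω → ℝ) (hf : IsMart P D f) (hfb : martNorm P D 1 f ≠ ∞)
    (η w : ℝ) (hη : 0 < η) (hw : 0 < w) (n : ℕ) (E : Set Ω) (hE : E ∈ D n) :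
    ∃ g : ℕ → Set Ω → ℝ, IsMart P D g ∧ martNorm P D 1 g ≠ ∞ ∧
      (∀ k ≤ n, ∀ A : Set Ω, g k A = 0) ∧
      martNorm P D 1 g < ENNReal.ofReal η ∧
      ∃ m : ℕ, n < m ∧ ∃ F ∈ D m, F ⊆ E ∧ f m F + g m F > w :=
  statement18_general P D hpart hA f hf η w hη n E hE

end MartingalePaper
end
end
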